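/- arXiv:2105.00581 — 6 statements merged into one kernel-verified Lean document; each statement's English description precedes it below -/
import Mathlib

section
/- Let S₁ and S₀ be disjoint finite index sets with n_s = |S₁| + |S₀| > 0. Let X_i ∈ 𝒳 and w_i ∈ ℝ for i ∈ S₁ ∪ S₀, let μ₀, μ₁ : 𝒳 → ℝ, define m(x) = (μ₀(x) + μ₁(x))/2 and τ(x) = μ₁(x) − μ₀(x), let ε_i ∈ ℝ, and set Y_i = μ₁(X_i) + ε_i for i ∈ S₁ and Y_i = μ₀(X_i) + ε_i for i ∈ S₀. For any d : 𝒳 → {0,1} ⊂ ℝ define V̂(d) = (1/n_s) Σ_{i∈S₁} w_i d(X_i) Y_i + (1/n_s) Σ_{i∈S₀} w_i (1 − d(X_i)) Y_i. Then for any two rules d*, d : 𝒳 → {0,1}: V̂(d*) − V̂(d) = (1/(2 n_s)) [ Σ_{i∈S₁} w_i (d*(X_i) − d(X_i)) τ(X_i) + Σ_{i∈S₀} w_i (d*(X_i) − d(X_i)) τ(X_i) ] + (1/n_s) [ Σ_{i∈S₁} w_i (d*(X_i) − d(X_i)) m(X_i) − Σ_{i∈S₀} w_i (d*(X_i) − d(X_i))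 m(X_i) ] + (1/n_s) [ Σ_{i∈S₁} w_i (d*(X_i) − d(X_i)) ε_i − Σ_{i∈S₀} w_i (d*(X_i) − d(X_i)) ε_i ]. -/
open scoped BigOperators

/-!
Both estimates weight the same units, so their difference only involves `d* − d`: with
weight `w i (d*(X i) − d(X i))` on a treated unit and the opposite weight on a control unit.
Writing `μ₁ = m + τ/2` and `μ₀ = m − τ/2`, the outcome of a treated unit is `τ/2 + m + ε` and that
of a control unit is `−τ/2 + m + ε`; the opposite weight of the controls turns `−τ/2` into `+τ/2`,
so `τ` enters both groups with the same sign while `m` and `ε` enter as treated-minus-control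
imbalances.
-/

section

variable {𝒳 ι : Type*}

/-- The weighted value estimate `V̂(d)` of a rule `d`. -/
noncomputable def weightedValue (S1 S0 : Finset ι) (X : ι → 𝒳) (w Y : ι → ℝ) (ns : ℕ)
    (d : 𝒳 → ℝ) : ℝ :=
  (1 / (ns : ℝ)) * ∑ i ∈ S1, w i * d (X i) * Y i
    + (1 / (ns : ℝ)) * ∑ i ∈ S0, w i * (1 - d (X i)) * Y i

theorem weightedValue_sub (S1 S0 : Finset ι) (X : ι → 𝒳) (w Y : ι → ℝ) (ns : ℕ)
    (dstar d : 𝒳 → ℝ) :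
    weightedValue S1 S0 X w Y ns dstar - weightedValue S1 S0 X w Y ns d
      = (1 / (ns : ℝ)) * (∑ i ∈ S1, w i * (dstar (X i) - d (X i)) * Y i
          - ∑ i ∈ S0, w i * (dstar (X i) - d (X i)) * Y i) := by
  have treated : ∑ i ∈ S1, w i * (dstar (X i) - d (X i)) * Y i
      = ∑ i ∈ S1, w i * dstar (X i) * Y i - ∑ i ∈ S1, w i * d (X i) * Y i := by
    rw [← Finset.sum_sub_distrib]
    exact Finset.sum_congr rfl fun i _ => by ring
  have control : ∑ i ∈ S0, w i * (dstar (X i) - d (X i)) * Y i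
      = ∑ i ∈ S0, w i * (1 - d (X i)) * Y i - ∑ i ∈ S0, w i * (1 - dstar (X i)) * Y i := by
    rw [← Finset.sum_sub_distrib]
    exact Finset.sum_congr rfl fun i _ => by ring
  rw [weightedValue, weightedValue, treated, control]
  ring

end

theorem Finset.sum_mul_eq_of_eq_smul_add_add {ι : Type*} {S : Finset ι} {a Y f g h : ι → ℝ}
    (c : ℝ) (hY : ∀ i ∈ S, Y i = c * f i + g i + h i) :
    ∑ i ∈ S, a i * Y i
      = c * ∑ i ∈ S, a i * f i + ∑ i ∈ S, a i * g i + ∑ i ∈ S, a i * h i := by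
  rw [Finset.mul_sum, ← Finset.sum_add_distrib, ← Finset.sum_add_distrib]
  exact Finset.sum_congr rfl fun i hi => by rw [hY i hi]; ring

theorem value_difference_decomposition_general
    {𝒳 ι : Type*} (S1 S0 : Finset ι)
    (X : ι → 𝒳) (w : ι → ℝ)
    (μ0 μ1 : 𝒳 → ℝ)
    (m τ : 𝒳 → ℝ)
    (hm : ∀ x, m x = (μ0 x + μ1 x) / 2) (hτ : ∀ x, τ x = μ1 x - μ0 x)
    (ε : ι → ℝ) (Y : ι → ℝ)
    (hY1 : ∀ i ∈ S1, Y i = μ1 (X i) + ε i)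
    (hY0 : ∀ i ∈ S0, Y i = μ0 (X i) + ε i)
    (ns : ℕ)
    (dstar d : 𝒳 → ℝ) :
    ((1 / (ns : ℝ)) * ∑ i ∈ S1, w i * dstar (X i) * Y i
        + (1 / (ns : ℝ)) * ∑ i ∈ S0, w i * (1 - dstar (X i)) * Y i)
      - ((1 / (ns : ℝ)) * ∑ i ∈ S1, w i * d (X i) * Y i
        + (1 / (ns : ℝ)) * ∑ i ∈ S0, w i * (1 - d (X i)) * Y i)
    = (1 / (2 * (ns : ℝ)))
        * (∑ i ∈ S1, w i * (dstar (X i) - d (X i)) * τ (X i)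
          + ∑ i ∈ S0, w i * (dstar (X i) - d (X i)) * τ (X i))
      + (1 / (ns : ℝ))
        * (∑ i ∈ S1, w i * (dstar (X i) - d (X i)) * m (X i)
          - ∑ i ∈ S0, w i * (dstar (X i) - d (X i)) * m (X i))
      + (1 / (ns : ℝ))
        * (∑ i ∈ S1, w i * (dstar (X i) - d (X i)) * ε i
          - ∑ i ∈ S0, w i * (dstar (X i) - d (X i)) * ε i) := by
  have hY1' : ∀ i ∈ S1, Y i = (1 / 2) * τ (X i) + m (X i) + ε i := fun i hi => by
    rw [hY1 i hi, hm, hτ]; ring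
  have hY0' : ∀ i ∈ S0, Y i = (-1 / 2) * τ (X i) + m (X i) + ε i := fun i hi => by
    rw [hY0 i hi, hm, hτ]; ring
  refine (weightedValue_sub S1 S0 X w Y ns dstar d).trans ?_
  rw [Finset.sum_mul_eq_of_eq_smul_add_add _ hY1', Finset.sum_mul_eq_of_eq_smul_add_add _ hY0']
  ring

/-- **Decomposition of the difference of weighted value estimates between two rules.**
`V̂(d*) − V̂(d)` splits into a CATE term, a main-effect imbalance term between the weighted
treated and control groups, and a noise term, where `m = (μ₀ + μ₁)/2` and `τ = μ₁ − μ₀`. -/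
theorem value_difference_decomposition
    {𝒳 ι : Type*} (S1 S0 : Finset ι) (h10 : Disjoint S1 S0)
    (X : ι → 𝒳) (w : ι → ℝ)
    (μ0 μ1 : 𝒳 → ℝ)
    (m τ : 𝒳 → ℝ)
    (hm : ∀ x, m x = (μ0 x + μ1 x) / 2) (hτ : ∀ x, τ x = μ1 x - μ0 x)
    (ε : ι → ℝ) (Y : ι → ℝ)
    (hY1 : ∀ i ∈ S1, Y i = μ1 (X i) + ε i)
    (hY0 : ∀ i ∈ S0, Y i = μ0 (X i) + ε i)
    (ns : ℕ) (hns : ns = S1.card + S0.card) (hns0 : 0 < ns)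
    (dstar d : 𝒳 → ℝ)
    (hdstar : ∀ x, dstar x = 0 ∨ dstar x = 1) (hd : ∀ x, d x = 0 ∨ d x = 1) :
    ((1 / (ns : ℝ)) * ∑ i ∈ S1, w i * dstar (X i) * Y i
        + (1 / (ns : ℝ)) * ∑ i ∈ S0, w i * (1 - dstar (X i)) * Y i)
      - ((1 / (ns : ℝ)) * ∑ i ∈ S1, w i * d (X i) * Y i
        + (1 / (ns : ℝ)) * ∑ i ∈ S0, w i * (1 - d (X i)) * Y i)
    = (1 / (2 * (ns : ℝ)))
        * (∑ i ∈ S1, w i * (dstar (X i) - d (X i)) * τ (X i)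
          + ∑ i ∈ S0, w i * (dstar (X i) - d (X i)) * τ (X i))
      + (1 / (ns : ℝ))
        * (∑ i ∈ S1, w i * (dstar (X i) - d (X i)) * m (X i)
          - ∑ i ∈ S0, w i * (dstar (X i) - d (X i)) * m (X i))
      + (1 / (ns : ℝ))
        * (∑ i ∈ S1, w i * (dstar (X i) - d (X i)) * ε i
          - ∑ i ∈ S0, w i * (dstar (X i) - d (X i)) * ε i) :=
  value_difference_decomposition_general S1 S0 X w μ0 μ1 m τ hm hτ ε Y hY1 hY0 ns dstar d
end

section
/- Let H be a real Hilbert space, and let S₁, S₀ and T be pairwise disjoint finite index sets with feature vectors φ_i ∈ H for each index i. Let n_s = |S₁| + |S₀| > 0, n_t = |T| > 0, α ∈ ℝ, λ ∈ ℝ, and let w = (w_i)_{i∈S₁∪S₀} ∈ ℝ^{n_s}. Define u₁ = (1/n_s) Σ_{i∈S₁} w_i φ_i, u₀ = (1/n_s) Σ_{i∈S₀} w_i φ_i, t = (1/n_t) Σ_{i∈T} φ_i, and K(i,j) = ⟪φ_i, φ_j⟫_H. Then α ‖u₁ − t‖² + α ‖u₀ − t‖² + (1 − α) ‖u₁ −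 u₀‖² + (λ/n_s²) Σ_{i∈S₁∪S₀} w_i² = wᵀ Σ w − 2 bᵀ w + c, where Σ is the block matrix (1/n_s²) [[K_{S₁S₁} + λ I, (α−1) K_{S₁S₀}], [(α−1) K_{S₀S₁}, K_{S₀S₀} + λ I]] with K_{S_a S_{a'}} = (K(i,j))_{i∈S_a, j∈S_{a'}}, b = (α/(n_s n_t)) [K_{S₁T} 𝟏; K_{S₀T} 𝟏] with K_{S_a T} = (K(i,j))_{i∈S_a, j∈T} and 𝟏 the all-ones vector, and c = (2α/n_t²) Σ_{i∈T} Σ_{j∈T} K(i,j). -/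
/-!
Every Gram-matrix quadratic form `xᵀ K_{φψ} y` is the inner product `⟪∑ xᵢ φᵢ, ∑ yⱼ ψⱼ⟫`, so the
right-hand side is a polynomial in `1 / n_s`, `1 / n_t` and the inner products of the three
unnormalised embeddings `∑ wᵢ φᵢ` over `S₁`, over `S₀`, and `∑ φⱼ` over `T`. Expanding each squared
norm on the left-hand side produces the same polynomial.
-/

namespace Matrix

def crossGram (𝕜 : Type*) {E m n : Type*} [Inner 𝕜 E] (φ : m → E) (ψ : n → E) : Matrix m n 𝕜 :=
  of fun i j ↦ inner 𝕜 (φ i) (ψ j)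

theorem dotProduct_crossGram_mulVec {𝕜 E m n : Type*} [RCLike 𝕜] [SeminormedAddCommGroup E]
    [InnerProductSpace 𝕜 E] [Fintype m] [Fintype n] (φ : m → E) (ψ : n → E) (x : m → 𝕜)
    (y : n → 𝕜) :
    x ⬝ᵥ crossGram 𝕜 φ ψ *ᵥ y = inner 𝕜 (∑ i, star (x i) • φ i) (∑ j, y j • ψ j) := by
  simp_rw [sum_inner, inner_sum, inner_smul_left, inner_smul_right, starRingEnd_apply, star_star,
    dotProduct, mulVec, dotProduct, Finset.mul_sum, crossGram, of_apply]
  exact Finset.sum_congr rfl fun i _ ↦ Finset.sum_congr rfl fun j _ ↦ by ring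

theorem sumElim_dotProduct_fromBlocks_mulVec_sumElim {R m n : Type*} [Fintype m] [Fintype n]
    [NonUnitalNonAssocSemiring R] (A : Matrix m m R) (B : Matrix m n R) (C : Matrix n m R)
    (D : Matrix n n R) (x₁ y₁ : m → R) (x₂ y₂ : n → R) :
    Sum.elim x₁ x₂ ⬝ᵥ fromBlocks A B C D *ᵥ Sum.elim y₁ y₂ =
      x₁ ⬝ᵥ A *ᵥ y₁ + x₁ ⬝ᵥ B *ᵥ y₂ + (x₂ ⬝ᵥ C *ᵥ y₁ + x₂ ⬝ᵥ D *ᵥ y₂) := by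
  simp [fromBlocks_mulVec, dotProduct_add]

end Matrix

open Matrix

theorem balancing_objective_quadratic_form_general
    {H : Type*} [NormedAddCommGroup H] [InnerProductSpace ℝ H]
    {ι1 ι0 ιT : Type*} [Fintype ι1] [Fintype ι0] [Fintype ιT]
    [DecidableEq ι1] [DecidableEq ι0]
    (φ1 : ι1 → H) (φ0 : ι0 → H) (φT : ιT → H)
    (ns nt : ℕ)
    (α lam : ℝ) (w : ι1 ⊕ ι0 → ℝ) :
    let u1 : H := (1 / (ns : ℝ)) • ∑ i, w (Sum.inl i) • φ1 i
    let u0 : H := (1 / (ns : ℝ)) • ∑ i, w (Sum.inr i) • φ0 i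
    let t : H := (1 / (nt : ℝ)) • ∑ j, φT j
    let M : Matrix (ι1 ⊕ ι0) (ι1 ⊕ ι0) ℝ :=
      (1 / (ns : ℝ) ^ 2) • Matrix.fromBlocks
        (Matrix.of fun i j => (inner ℝ (φ1 i) (φ1 j) : ℝ) + lam * (if i = j then 1 else 0))
        (Matrix.of fun i j => (α - 1) * (inner ℝ (φ1 i) (φ0 j) : ℝ))
        (Matrix.of fun i j => (α - 1) * (inner ℝ (φ0 i) (φ1 j) : ℝ))
        (Matrix.of fun i j => (inner ℝ (φ0 i) (φ0 j) : ℝ) + lam * (if i = j then 1 else 0))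
    let b : ι1 ⊕ ι0 → ℝ :=
      Sum.elim
        (fun i => (α / ((ns : ℝ) * (nt : ℝ))) * ∑ j, (inner ℝ (φ1 i) (φT j) : ℝ))
        (fun i => (α / ((ns : ℝ) * (nt : ℝ))) * ∑ j, (inner ℝ (φ0 i) (φT j) : ℝ))
    let c : ℝ := (2 * α / (nt : ℝ) ^ 2) * ∑ i, ∑ j, (inner ℝ (φT i) (φT j) : ℝ)
    α * ‖u1 - t‖ ^ 2 + α * ‖u0 - t‖ ^ 2 + (1 - α) * ‖u1 - u0‖ ^ 2
        + (lam / (ns : ℝ) ^ 2) * ∑ i, w i ^ 2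
      = dotProduct w (M.mulVec w) - 2 * dotProduct b w + c := by
  obtain ⟨w1, w0, rfl⟩ : ∃ w1 w0, w = Sum.elim w1 w0 := ⟨_, _, (Sum.elim_comp_inl_inr w).symm⟩
  intro u1 u0 t M b c
  have hM : M = (1 / (ns : ℝ) ^ 2) • fromBlocks (crossGram ℝ φ1 φ1 + lam • 1)
      ((α - 1) • crossGram ℝ φ1 φ0) ((α - 1) • crossGram ℝ φ0 φ1) (crossGram ℝ φ0 φ0 + lam • 1) :=
    rfl
  have hb : b = (α / ((ns : ℝ) * nt)) •
      Sum.elim (crossGram ℝ φ1 φT *ᵥ 1) (crossGram ℝ φ0 φT *ᵥ 1) := by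
    ext (i | i) <;> simp [b, crossGram, mulVec, dotProduct]
  have hc : c = 2 * α / (nt : ℝ) ^ 2 * (1 ⬝ᵥ crossGram ℝ φT φT *ᵥ 1) := by
    simp [c, crossGram, mulVec, dotProduct]
  rw [hM, hb, hc, smul_mulVec, dotProduct_smul, smul_dotProduct,
    sumElim_dotProduct_fromBlocks_mulVec_sumElim, sumElim_dotProduct_sumElim,
    dotProduct_comm _ w1, dotProduct_comm _ w0]
  simp only [add_mulVec, smul_mulVec, one_mulVec, dotProduct_add, dotProduct_smul,
    dotProduct_crossGram_mulVec, star_trivial, Pi.one_apply, one_smul, smul_eq_mul]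
  simp only [u1, u0, t, Fintype.sum_sum_type, Sum.elim_inl, Sum.elim_inr, dotProduct, ← sq]
  generalize ∑ i, w1 i • φ1 i = a1, ∑ i, w0 i • φ0 i = a0, ∑ j, φT j = s
  simp only [norm_sub_sq_real, norm_smul, mul_pow, Real.norm_eq_abs, sq_abs,
    real_inner_smul_left, real_inner_smul_right, real_inner_self_eq_norm_sq, real_inner_comm a1]
  ring

/-- **Finite-sample quadratic-form representation of the balancing objective.** The three-way
balancing objective — a convex combination (parameter `α`) of the squared MMDs between the
weighted treated group and the target, the weighted control group and the target, and the
weighted treated and control groups, plus a ridge penalty — equals `wᵀ Σ w − 2 bᵀ w + c` with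
the block Gram matrix `Σ`, the vector `b` and the constant `c` given explicitly. -/
theorem balancing_objective_quadratic_form
    {H : Type*} [NormedAddCommGroup H] [InnerProductSpace ℝ H]
    {ι1 ι0 ιT : Type*} [Fintype ι1] [Fintype ι0] [Fintype ιT]
    [DecidableEq ι1] [DecidableEq ι0]
    (φ1 : ι1 → H) (φ0 : ι0 → H) (φT : ιT → H)
    (ns nt : ℕ) (hns : ns = Fintype.card ι1 + Fintype.card ι0)
    (hnt : nt = Fintype.card ιT) (hns0 : 0 < ns) (hnt0 : 0 < nt)
    (α lam : ℝ) (w : ι1 ⊕ ι0 → ℝ) :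
    let u1 : H := (1 / (ns : ℝ)) • ∑ i, w (Sum.inl i) • φ1 i
    let u0 : H := (1 / (ns : ℝ)) • ∑ i, w (Sum.inr i) • φ0 i
    let t : H := (1 / (nt : ℝ)) • ∑ j, φT j
    let M : Matrix (ι1 ⊕ ι0) (ι1 ⊕ ι0) ℝ :=
      (1 / (ns : ℝ) ^ 2) • Matrix.fromBlocks
        (Matrix.of fun i j => (inner ℝ (φ1 i) (φ1 j) : ℝ) + lam * (if i = j then 1 else 0))
        (Matrix.of fun i j => (α - 1) * (inner ℝ (φ1 i) (φ0 j) : ℝ))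
        (Matrix.of fun i j => (α - 1) * (inner ℝ (φ0 i) (φ1 j) : ℝ))
        (Matrix.of fun i j => (inner ℝ (φ0 i) (φ0 j) : ℝ) + lam * (if i = j then 1 else 0))
    let b : ι1 ⊕ ι0 → ℝ :=
      Sum.elim
        (fun i => (α / ((ns : ℝ) * (nt : ℝ))) * ∑ j, (inner ℝ (φ1 i) (φT j) : ℝ))
        (fun i => (α / ((ns : ℝ) * (nt : ℝ))) * ∑ j, (inner ℝ (φ0 i) (φT j) : ℝ))
    let c : ℝ := (2 * α / (nt : ℝ) ^ 2) * ∑ i, ∑ j, (inner ℝ (φT i) (φT j) : ℝ)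
    α * ‖u1 - t‖ ^ 2 + α * ‖u0 - t‖ ^ 2 + (1 - α) * ‖u1 - u0‖ ^ 2
        + (lam / (ns : ℝ) ^ 2) * ∑ i, w i ^ 2
      = dotProduct w (M.mulVec w) - 2 * dotProduct b w + c :=
  balancing_objective_quadratic_form_general φ1 φ0 φT ns nt α lam w
end

section
/- Let (Ω, 𝔽, μ) be a probability space, X : Ω → ℝ^p, S : Ω → {0,1}, A : Ω → {0,1} measurable. Suppose there exist measurable ρ, π : ℝ^p → ℝ and a constant c > 0 such that ρ∘X is a version of E_μ[S | σ(X)], (π∘X)·(ρ∘X) is a version of E_μ[S·A | σ(X)], and ρ∘X ≥ c and π∘X ≥ c μ-a.e. Then for every bounded measurable h : ℝ^p → ℝ: E_μ[ S · A · (1/(π∘X)) · ((1 − ρ∘X)/(ρ∘X)) · h(X) ] = E_μ[ (1 − S) · h(X) ]. That is, the importance weights exactly reweight the covariate distribution of the treated units in the source population to the covariate distribution of the target population. -/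
/-!
Both sides equal `E[(1 - ρ(X)) h(X)]`. The factors depending on `X` alone are
`σ(X)`-measurable and, because `π, ρ ≥ c`, bounded; so they pull out of the conditional
expectation given `X`, which turns `S·A` into `π(X) ρ(X)` on the left and `1 - S` into
`1 - ρ(X)` on the right.
-/

open MeasureTheory ProbabilityTheory

section

variable {Ω β : Type*} {m m₀ : MeasurableSpace Ω} {μ : Measure Ω}

lemma integrable_of_ae_eq_condExp_of_ae_ge [NeZero μ] {f g : Ω → ℝ} {c : ℝ} (hc : 0 < c)
    (hg : g =ᵐ[μ] μ[f | m]) (hcg : ∀ᵐ ω ∂μ, c ≤ g ω) : Integrable f μ := by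
  -- `μ[f | m]` is the junk value `0` when `f` is not integrable.
  by_contra hf
  rw [condExp_of_not_integrable hf] at hg
  obtain ⟨ω, hω, hcω⟩ := (hg.and hcg).exists
  exact hc.not_ge (by simpa [hω] using hcω)

lemma condExp_one_sub (hm : m ≤ m₀) [IsFiniteMeasure μ] {f : Ω → ℝ} (hf : Integrable f μ) :
    μ[fun ω => 1 - f ω | m] =ᵐ[μ] fun ω => 1 - μ[f | m] ω := by
  have h := condExp_sub (integrable_const (1 : ℝ)) hf m
  rwa [condExp_const hm] at h

lemma integral_mul_condExp_of_bound (hm : m ≤ m₀) [IsFiniteMeasure μ] {k f : Ω → ℝ}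
    (hk : StronglyMeasurable[m] k) (hf : Integrable f μ) (C : ℝ) (hkC : ∀ᵐ ω ∂μ, ‖k ω‖ ≤ C) :
    ∫ ω, k ω * f ω ∂μ = ∫ ω, k ω * μ[f | m] ω ∂μ :=
  (integral_condExp hm).symm.trans
    (integral_congr_ae (condExp_stronglyMeasurable_mul_of_bound hm hk hf C hkC))

lemma integral_comp_mul_eq_of_condExp_comap_ae_eq [mβ : MeasurableSpace β] [IsFiniteMeasure μ]
    {X : Ω → β} (hX : Measurable X) {f : Ω → ℝ} {φ g : β → ℝ} (hf : Integrable f μ)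
    (hφ : μ[f | MeasurableSpace.comap X mβ] =ᵐ[μ] fun ω => φ (X ω))
    (hg : Measurable g) (C : ℝ) (hgC : ∀ᵐ ω ∂μ, |g (X ω)| ≤ C) :
    ∫ ω, g (X ω) * f ω ∂μ = ∫ ω, g (X ω) * φ (X ω) ∂μ := by
  rw [integral_mul_condExp_of_bound (k := fun ω => g (X ω)) hX.comap_le
    (hg.comp (comap_measurable X)).stronglyMeasurable hf C hgC]
  exact integral_congr_ae (hφ.mono fun ω hω => congrArg (g (X ω) * ·) hω)

end

lemma abs_one_div_mul_one_sub_div_mul_le {π ρ x c C : ℝ} (hc : 0 < c) (hπ : c ≤ π)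
    (hρ : c ≤ ρ) (hx : |x| ≤ C) : |1 / π * ((1 - ρ) / ρ) * x| ≤ c⁻¹ * (c⁻¹ + 1) * C := by
  have hπ₀ : 0 < π := hc.trans_le hπ
  have hρ₀ : 0 < ρ := hc.trans_le hρ
  have hπ' : |1 / π| ≤ c⁻¹ := by
    rw [abs_of_pos (one_div_pos.2 hπ₀), one_div]
    exact inv_anti₀ hc hπ
  have hρ' : |(1 - ρ) / ρ| ≤ c⁻¹ + 1 :=
    calc |(1 - ρ) / ρ| = |ρ⁻¹ - 1| := by rw [sub_div, div_self hρ₀.ne', one_div]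
      _ ≤ |ρ⁻¹| + |1| := abs_sub _ _
      _ ≤ c⁻¹ + 1 := by
        rw [abs_one, abs_of_pos (inv_pos.2 hρ₀)]
        gcongr
  rw [abs_mul, abs_mul]
  gcongr

theorem importance_weights_reweight_to_target_general
    {Ω : Type*} [MeasurableSpace Ω] (μ : Measure Ω) [IsProbabilityMeasure μ] {p : ℕ}
    (X : Ω → (Fin p → ℝ)) (S A : Ω → ℝ)
    (hX : Measurable X)
    (ρ π : (Fin p → ℝ) → ℝ) (hρm : Measurable ρ) (hπm : Measurable π)
    (c : ℝ) (hc : 0 < c)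
    (hρver : (fun ω => ρ (X ω)) =ᵐ[μ] μ[S | MeasurableSpace.comap X inferInstance])
    (hπρver : (fun ω => π (X ω) * ρ (X ω))
        =ᵐ[μ] μ[fun ω => S ω * A ω | MeasurableSpace.comap X inferInstance])
    (hρpos : ∀ᵐ ω ∂μ, c ≤ ρ (X ω)) (hπpos : ∀ᵐ ω ∂μ, c ≤ π (X ω)) :
    ∀ h : (Fin p → ℝ) → ℝ, Measurable h → (∃ C, ∀ x, |h x| ≤ C) →
      ∫ ω, S ω * A ω * (1 / π (X ω)) * ((1 - ρ (X ω)) / ρ (X ω)) * h (X ω) ∂μ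
        = ∫ ω, (1 - S ω) * h (X ω) ∂μ := by
  rintro h hh ⟨C, hC⟩
  have hS : Integrable S μ := integrable_of_ae_eq_condExp_of_ae_ge hc hρver hρpos
  have hSA : Integrable (fun ω => S ω * A ω) μ :=
    integrable_of_ae_eq_condExp_of_ae_ge (mul_pos hc hc) hπρver <| by
      filter_upwards [hπpos, hρpos] with ω hπ hρ using mul_le_mul hπ hρ hc.le (hc.le.trans hπ)
  set w : (Fin p → ℝ) → ℝ := fun x => 1 / π x * ((1 - ρ x) / ρ x) * h x
  have hw : ∀ᵐ ω ∂μ, |w (X ω)| ≤ c⁻¹ * (c⁻¹ + 1) * C := by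
    filter_upwards [hπpos, hρpos] with ω hπ hρ
    exact abs_one_div_mul_one_sub_div_mul_le hc hπ hρ (hC _)
  calc _ = ∫ ω, w (X ω) * (S ω * A ω) ∂μ := by congr 1 with ω; ring
    _ = ∫ ω, w (X ω) * (π (X ω) * ρ (X ω)) ∂μ :=
        integral_comp_mul_eq_of_condExp_comap_ae_eq (φ := fun x => π x * ρ x) hX hSA
          hπρver.symm (by fun_prop) _ hw
    _ = ∫ ω, h (X ω) * (1 - ρ (X ω)) ∂μ := by
        refine integral_congr_ae ?_
        filter_upwards [hπpos, hρpos] with ω hπ hρ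
        simp only [w]
        field_simp [(hc.trans_le hπ).ne', (hc.trans_le hρ).ne']
    _ = ∫ ω, h (X ω) * (1 - S ω) ∂μ := by
        refine (integral_comp_mul_eq_of_condExp_comap_ae_eq (f := fun ω => 1 - S ω)
          (φ := fun x => 1 - ρ x) hX ((integrable_const 1).sub hS) ?_ hh C
          (.of_forall fun ω => hC _)).symm
        filter_upwards [condExp_one_sub hX.comap_le hS, hρver] with ω hω hρ
        rw [hω, hρ]
    _ = _ := by congr 1 with ω; ring

/-- **Importance weights reweight the treated source units to the target population.**
With `ρ(X)` a version of `E[S | X]`, `π(X)ρ(X)` a version of `E[S·A | X]`, and both `ρ∘X`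
and `π∘X` bounded below by `c > 0` a.e., for every bounded measurable `h`:
`E[S·A·(1/π(X))·((1−ρ(X))/ρ(X))·h(X)] = E[(1−S)·h(X)]`. -/
theorem importance_weights_reweight_to_target
    {Ω : Type*} [MeasurableSpace Ω] (μ : Measure Ω) [IsProbabilityMeasure μ] {p : ℕ}
    (X : Ω → (Fin p → ℝ)) (S A : Ω → ℝ)
    (hX : Measurable X) (hS : Measurable S) (hA : Measurable A)
    (hSbin : ∀ ω, S ω = 0 ∨ S ω = 1) (hAbin : ∀ ω, A ω = 0 ∨ A ω = 1)
    (ρ π : (Fin p → ℝ) → ℝ) (hρm : Measurable ρ) (hπm : Measurable π)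
    (c : ℝ) (hc : 0 < c)
    (hρver : (fun ω => ρ (X ω)) =ᵐ[μ] μ[S | MeasurableSpace.comap X inferInstance])
    (hπρver : (fun ω => π (X ω) * ρ (X ω))
        =ᵐ[μ] μ[fun ω => S ω * A ω | MeasurableSpace.comap X inferInstance])
    (hρpos : ∀ᵐ ω ∂μ, c ≤ ρ (X ω)) (hπpos : ∀ᵐ ω ∂μ, c ≤ π (X ω)) :
    ∀ h : (Fin p → ℝ) → ℝ, Measurable h → (∃ C, ∀ x, |h x| ≤ C) →
      ∫ ω, S ω * A ω * (1 / π (X ω)) * ((1 - ρ (X ω)) / ρ (X ω)) * h (X ω) ∂μ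
        = ∫ ω, (1 - S ω) * h (X ω) ∂μ :=
  importance_weights_reweight_to_target_general μ X S A hX ρ π hρm hπm c hc hρver hπρver hρpos hπpos
end

section
/- Let (Ω, 𝔽, ν) be a probability space, X : Ω → ℝ^p and A : Ω → {0,1} measurable, and suppose there exists measurable π : ℝ^p → ℝ such that π∘X is a version of the conditional expectation E_ν[A | σ(X)] and 0 ≤ π∘X ≤ 1 ν-a.e. Then for every bounded measurable h : ℝ^p → ℝ: E_ν[ A · (1 − π(X)) · h(X) ] = E_ν[ (1 − A) · π(X) · h(X) ] = E_ν[ π(X)·(1 − π(X)) · h(X) ]. That is, the overlap weights achieve exact population-level balance: the overlap-weighted covariate distribution of the treated group coincides with the overlap-weighted covariate distribution of the control group, and both equal the distribution retargeted by the density ratio proportional to π(x)(1 − π(x)). -/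
/-!
Since `π(X) = E[A | X]`, the residual `A - π(X)` is orthogonal to every bounded function of `X`;
in the same way `1 - π(X) = E[1 - A | X]`. Testing the first against `(1 - π(X)) h(X)` and the
second against `π(X) h(X)` identifies both overlap-weighted integrals with
`E[π(X)(1 - π(X)) h(X)]`.
-/

open MeasureTheory ProbabilityTheory

section

variable {Ω : Type*} {m m₀ : MeasurableSpace Ω} {μ : Measure Ω}

theorem integral_mul_eq_of_ae_eq_condExp (hm : m ≤ m₀) [SigmaFinite (μ.trim hm)]
    {f φ g : Ω → ℝ} (hf : Integrable f μ) (hφ : φ =ᵐ[μ] μ[f | m])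
    (hg : AEStronglyMeasurable[m] g μ) {C : ℝ} (hgC : ∀ᵐ ω ∂μ, |g ω| ≤ C) :
    ∫ ω, f ω * g ω ∂μ = ∫ ω, φ ω * g ω ∂μ := by
  have hfg : Integrable (f * g) μ := hf.mul_bdd (hg.mono hm) hgC
  calc ∫ ω, f ω * g ω ∂μ = ∫ ω, μ[f * g | m] ω ∂μ := (integral_condExp hm).symm
    _ = ∫ ω, (μ[f | m] * g) ω ∂μ :=
        integral_congr_ae (condExp_mul_of_aestronglyMeasurable_right hg hfg hf)
    _ = ∫ ω, φ ω * g ω ∂μ :=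
        integral_congr_ae (by filter_upwards [hφ] with ω hω using by simp [hω])

theorem one_sub_ae_eq_condExp_one_sub [IsFiniteMeasure μ] (hm : m ≤ m₀) {f φ : Ω → ℝ}
    (hf : Integrable f μ) (hφ : φ =ᵐ[μ] μ[f | m]) :
    (fun ω => 1 - φ ω) =ᵐ[μ] μ[fun ω => 1 - f ω | m] := by
  have hsub := condExp_sub (integrable_const (1 : ℝ)) hf m
  rw [condExp_const hm] at hsub
  filter_upwards [hφ, hsub] with ω hω hω_sub
  change _ = μ[(fun _ => 1) - f | m] ω
  rw [hω_sub, Pi.sub_apply, hω]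

end

/-- **Exact population-level balance of the overlap weights.** With `π(X)` a version of
`E[A | X]` and `0 ≤ π(X) ≤ 1` a.e., for every bounded measurable `h`:
`E[A(1−π(X))h(X)] = E[(1−A)π(X)h(X)] = E[π(X)(1−π(X))h(X)]`. -/
theorem overlap_weights_exact_balance
    {Ω : Type*} [MeasurableSpace Ω] (ν : Measure Ω) [IsProbabilityMeasure ν] {p : ℕ}
    (X : Ω → (Fin p → ℝ)) (A : Ω → ℝ)
    (hX : Measurable X) (hA : Measurable A) (hAbin : ∀ ω, A ω = 0 ∨ A ω = 1)
    (π : (Fin p → ℝ) → ℝ) (hπm : Measurable π)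
    (hπver : (fun ω => π (X ω)) =ᵐ[ν] ν[A | MeasurableSpace.comap X inferInstance])
    (hπ01 : ∀ᵐ ω ∂ν, 0 ≤ π (X ω) ∧ π (X ω) ≤ 1) :
    ∀ h : (Fin p → ℝ) → ℝ, Measurable h → (∃ C, ∀ x, |h x| ≤ C) →
      (∫ ω, A ω * (1 - π (X ω)) * h (X ω) ∂ν
          = ∫ ω, (1 - A ω) * π (X ω) * h (X ω) ∂ν)
      ∧ ∫ ω, A ω * (1 - π (X ω)) * h (X ω) ∂ν
          = ∫ ω, π (X ω) * (1 - π (X ω)) * h (X ω) ∂ν := by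
  rintro h hh ⟨C, hC⟩
  have hX_le := hX.comap_le
  have hXm : Measurable[MeasurableSpace.comap X inferInstance] X := comap_measurable X
  have hA_int : Integrable A ν :=
    .of_bound hA.aestronglyMeasurable 1
      (ae_of_all _ fun ω => by rcases hAbin ω with hω | hω <;> simp [hω])
  have hbound :
      ∀ᵐ ω ∂ν, |(1 - π (X ω)) * h (X ω)| ≤ C ∧ |π (X ω) * h (X ω)| ≤ C := by
    filter_upwards [hπ01] with ω ⟨h0, h1⟩
    rw [abs_mul, abs_mul, abs_of_nonneg h0, abs_of_nonneg (sub_nonneg.2 h1)]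
    constructor <;> nlinarith [hC (X ω), abs_nonneg (h (X ω))]
  have treated := integral_mul_eq_of_ae_eq_condExp hX_le hA_int hπver
    (g := fun ω => (1 - π (X ω)) * h (X ω))
    ((measurable_const.sub (hπm.comp hXm)).mul (hh.comp hXm)).aestronglyMeasurable
    (hbound.mono fun _ => And.left)
  have control := integral_mul_eq_of_ae_eq_condExp hX_le ((integrable_const 1).sub hA_int)
    (one_sub_ae_eq_condExp_one_sub hX_le hA_int hπver) (g := fun ω => π (X ω) * h (X ω))
    ((hπm.comp hXm).mul (hh.comp hXm)).aestronglyMeasurable (hbound.mono fun _ => And.right)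
  simp only [← mul_assoc] at treated control
  refine ⟨treated.trans (control.trans ?_).symm, treated⟩
  congr 1 with ω
  ring
end

section
/- Let (Ω, 𝔽, ν) be a probability space with Ω a standard Borel space, X : Ω → ℝ^p and A : Ω → {0,1} measurable, and Y₀, Y₁ : Ω → ℝ bounded measurable; set Y = A·Y₁ + (1−A)·Y₀. Assume there exist measurable π : ℝ^p → ℝ and c > 0 with π∘X a version of E_ν[A | σ(X)], c ≤ π∘X ≤ 1 − c ν-a.e., and assume (Y₀, Y₁) is conditionally independent of A given σ(X) under ν. Then for every measurable d : ℝ^p → {0,1}: E_ν[ 1{d(X) = A} · ( A/π(X) + (1−A)/(1−π(X)) ) · π(X)·(1 − π(X)) · Y ] = E_ν[ π(X)·(1 − π(X)) · ( d(X)·Y₁ + (1 − d(X))·Y₀ ) ]. That is, the overlap-weighted value estimator identifies E[Y(d(X)) π(X)(1−π(X))], the value of the rule d on the overlap-retargeted population. -/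
/-!
For binary `A`, `d` and `0 < π(X) < 1`, the weighted observed outcome equals
`π(1 - π)(d Y₁ + (1 - d) Y₀) + (A - π)(Y₁ d (1 - π) - Y₀ (1 - d) π)` pointwise, so it suffices
that the correction terms have mean zero. Unconfoundedness gives `E[φ(Y₀, Y₁) A G(X)] =
E[φ(Y₀, Y₁) π(X) G(X)]`: for `φ` an indicator this is the product rule for conditional
probabilities given `X`, and conditioning on `(Y₀, Y₁)` extends it to every bounded `φ`.
-/

open MeasureTheory ProbabilityTheory
open scoped ENNReal

namespace MeasureTheory

variable {Ω : Type*} {m mΩ : MeasurableSpace Ω} {μ : Measure Ω}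

theorem MemLp.mul_top {f g : Ω → ℝ} (hf : MemLp f ∞ μ) (hg : MemLp g ∞ μ) :
    MemLp (fun ω => f ω * g ω) ∞ μ :=
  hg.mul' hf

theorem memLp_top_of_forall_eq_zero_or_eq_one {f : Ω → ℝ} (hf : AEStronglyMeasurable f μ)
    (h01 : ∀ ω, f ω = 0 ∨ f ω = 1) : MemLp f ∞ μ :=
  memLp_top_of_bound hf 1 <| ae_of_all _ fun ω => by rcases h01 ω with h | h <;> simp [h]

theorem integral_mul_eq_zero_of_forall_setIntegral_eq_zero (hm : m ≤ mΩ)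
    [SigmaFinite (μ.trim hm)] {ρ h : Ω → ℝ} (hρ : Integrable ρ μ)
    (hρ_zero : ∀ s, MeasurableSet[m] s → ∫ ω in s, ρ ω ∂μ = 0) (hh : StronglyMeasurable[m] h)
    (hhρ : Integrable (h * ρ) μ) :
    ∫ ω, h ω * ρ ω ∂μ = 0 := by
  have hρ_condExp : 0 =ᵐ[μ] μ[ρ | m] :=
    ae_eq_condExp_of_forall_setIntegral_eq hm hρ (fun _ _ _ => integrableOn_zero)
      (fun s hs _ => by simp [hρ_zero s hs]) aestronglyMeasurable_zero
  calc ∫ ω, h ω * ρ ω ∂μ = ∫ ω, (μ[h * ρ | m]) ω ∂μ := (integral_condExp hm).symm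
    _ = ∫ ω, h ω * 0 ∂μ := by
        refine integral_congr_ae ?_
        filter_upwards [condExp_mul_of_stronglyMeasurable_left hh hhρ hρ, hρ_condExp]
          with ω hω h0
        rw [hω, Pi.mul_apply, ← h0, Pi.zero_apply]
    _ = 0 := by simp

theorem setIntegral_eq_integral_mul_condExp_indicator (hm : m ≤ mΩ) [IsFiniteMeasure μ]
    {H : Ω → ℝ} (hH : StronglyMeasurable[m] H) (hHi : Integrable H μ) {S : Set Ω}
    (hS : MeasurableSet S) :
    ∫ ω in S, H ω ∂μ = ∫ ω, H ω * (μ⟦S | m⟧) ω ∂μ := by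
  have hHS : H * S.indicator (fun _ => (1 : ℝ)) = S.indicator H := by
    ext ω; by_cases h : ω ∈ S <;> simp [h]
  have hHSi : Integrable (H * S.indicator (fun _ => (1 : ℝ))) μ := hHS ▸ hHi.indicator hS
  calc ∫ ω in S, H ω ∂μ = ∫ ω, (H * S.indicator (fun _ => (1 : ℝ))) ω ∂μ := by
        rw [hHS, integral_indicator hS]
    _ = ∫ ω, (μ[H * S.indicator (fun _ => (1 : ℝ)) | m]) ω ∂μ := (integral_condExp hm).symm
    _ = ∫ ω, H ω * (μ⟦S | m⟧) ω ∂μ :=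
        integral_congr_ae (condExp_mul_of_stronglyMeasurable_left hH hHSi
          ((integrable_const 1).indicator hS))

end MeasureTheory

namespace ProbabilityTheory

variable {Ω β : Type*} [MeasurableSpace β] {m' mΩ : MeasurableSpace Ω} [StandardBorelSpace Ω]
  {hm' : m' ≤ mΩ} {μ : Measure Ω} [IsFiniteMeasure μ] {f : Ω → β}

theorem CondIndepFun.setIntegral_inter_preimage {β' : Type*} [MeasurableSpace β'] {g : Ω → β'}
    (hind : CondIndepFun m' hm' f g μ) (hf : Measurable f) (hg : Measurable g)
    {s : Set β} {t : Set β'} (hs : MeasurableSet s) (ht : MeasurableSet t) {G : Ω → ℝ}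
    (hG : StronglyMeasurable[m'] G) (hGb : MemLp G ∞ μ) :
    ∫ ω in f ⁻¹' s ∩ g ⁻¹' t, G ω ∂μ = ∫ ω in f ⁻¹' s, G ω * (μ⟦g ⁻¹' t | m'⟧) ω ∂μ := by
  have hprod := (condIndepFun_iff_condExp_inter_preimage_eq_mul hf hg).mp hind s t hs ht
  calc ∫ ω in f ⁻¹' s ∩ g ⁻¹' t, G ω ∂μ
      = ∫ ω, G ω * (μ⟦f ⁻¹' s ∩ g ⁻¹' t | m'⟧) ω ∂μ :=
        setIntegral_eq_integral_mul_condExp_indicator hm' hG (hGb.integrable le_top)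
          ((hf hs).inter (hg ht))
    _ = ∫ ω, G ω * (μ⟦g ⁻¹' t | m'⟧) ω * (μ⟦f ⁻¹' s | m'⟧) ω ∂μ := by
        refine integral_congr_ae ?_
        filter_upwards [hprod] with ω hω
        rw [hω]; ring
    _ = ∫ ω in f ⁻¹' s, G ω * (μ⟦g ⁻¹' t | m'⟧) ω ∂μ :=
        (setIntegral_eq_integral_mul_condExp_indicator hm' (hG.mul stronglyMeasurable_condExp)
          (integrable_condExp.mul_of_top_right hGb) (hf hs)).symm

theorem CondIndepFun.integral_mul_sub_mul_eq_zero {A P : Ω → ℝ}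
    (hind : CondIndepFun m' hm' f A μ) (hf : Measurable f) (hA : Measurable A)
    (hA_bin : ∀ ω, A ω = 0 ∨ A ω = 1) (hP : P =ᵐ[μ] μ[A | m']) {φ : β → ℝ} (hφ : Measurable φ)
    (hφb : MemLp (fun ω => φ (f ω)) ∞ μ) {G : Ω → ℝ} (hG : StronglyMeasurable[m'] G)
    (hGb : MemLp G ∞ μ) :
    ∫ ω, φ (f ω) * ((A ω - P ω) * G ω) ∂μ = 0 := by
  have hA_ind : (A ⁻¹' {1}).indicator (fun _ => (1 : ℝ)) = A := by
    ext ω; rcases hA_bin ω with h | h <;> simp [h]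
  have hAi : Integrable A μ :=
    (memLp_top_of_forall_eq_zero_or_eq_one hA.aestronglyMeasurable hA_bin).integrable le_top
  have hPi : Integrable P μ := integrable_condExp.congr hP.symm
  have hAGi : Integrable (fun ω => A ω * G ω) μ := hAi.mul_of_top_left hGb
  have hPGi : Integrable (fun ω => P ω * G ω) μ := hPi.mul_of_top_left hGb
  have hρi : Integrable (fun ω => (A ω - P ω) * G ω) μ := (hAi.sub hPi).mul_of_top_left hGb
  refine integral_mul_eq_zero_of_forall_setIntegral_eq_zero hf.comap_le hρi ?_
    (hφ.comp (comap_measurable f)).stronglyMeasurable (hρi.mul_of_top_right hφb)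
  rintro _ ⟨s, hs, rfl⟩
  have hAG : ∫ ω in f ⁻¹' s, A ω * G ω ∂μ = ∫ ω in f ⁻¹' s, P ω * G ω ∂μ := by
    calc ∫ ω in f ⁻¹' s, A ω * G ω ∂μ = ∫ ω in f ⁻¹' s ∩ A ⁻¹' {1}, G ω ∂μ := by
          rw [← setIntegral_indicator (hA (measurableSet_singleton 1))]
          congr 1 with ω
          rcases hA_bin ω with h | h <;> simp [h]
      _ = ∫ ω in f ⁻¹' s, G ω * (μ⟦A ⁻¹' {1} | m'⟧) ω ∂μ :=
          hind.setIntegral_inter_preimage hf hA hs (measurableSet_singleton 1) hG hGb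
      _ = ∫ ω in f ⁻¹' s, P ω * G ω ∂μ := by
          rw [hA_ind]
          refine integral_congr_ae (ae_restrict_of_ae ?_)
          filter_upwards [hP] with ω hω
          rw [hω, mul_comm]
  simp_rw [sub_mul]
  rw [integral_sub hAGi.integrableOn hPGi.integrableOn, hAG, sub_self]

end ProbabilityTheory

theorem overlap_weighted_observed_outcome_eq {a δ q y₀ y₁ : ℝ} (ha : a = 0 ∨ a = 1) (hδ : δ = 0 ∨ δ = 1)
    (hq₀ : q ≠ 0) (hq₁ : 1 - q ≠ 0) :
    (if δ = a then 1 else 0) * (a / q + (1 - a) / (1 - q)) * (q * (1 - q)) * (a * y₁ + (1 - a) * y₀)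
      = q * (1 - q) * (δ * y₁ + (1 - δ) * y₀)
        + (y₁ * ((a - q) * (δ * (1 - q))) - y₀ * ((a - q) * ((1 - δ) * q))) := by
  rcases ha with rfl | rfl <;> rcases hδ with rfl | rfl <;> norm_num <;> field_simp <;> ring

/-- **The overlap-weighted value estimator identifies the overlap-retargeted value.** Under
SUTVA, unconfoundedness and positivity of the propensity score, for every measurable rule `d`
taking values in `{0,1}`:
`E[1{d(X)=A}·(A/π(X) + (1−A)/(1−π(X)))·π(X)(1−π(X))·Y]
  = E[π(X)(1−π(X))·(d(X)Y₁ + (1−d(X))Y₀)]`. -/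
theorem overlap_weighted_value_identification
    {Ω : Type*} [MeasurableSpace Ω] [StandardBorelSpace Ω]
    (ν : Measure Ω) [IsProbabilityMeasure ν] {p : ℕ}
    (X : Ω → (Fin p → ℝ)) (A : Ω → ℝ) (Y0 Y1 : Ω → ℝ)
    (hX : Measurable X) (hA : Measurable A)
    (hY0m : Measurable Y0) (hY1m : Measurable Y1)
    (hAbin : ∀ ω, A ω = 0 ∨ A ω = 1)
    (hY0b : ∃ C, ∀ ω, |Y0 ω| ≤ C) (hY1b : ∃ C, ∀ ω, |Y1 ω| ≤ C)
    (π : (Fin p → ℝ) → ℝ) (hπm : Measurable π) (c : ℝ) (hc : 0 < c)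
    (hπver : (fun ω => π (X ω)) =ᵐ[ν] ν[A | MeasurableSpace.comap X inferInstance])
    (hπb : ∀ᵐ ω ∂ν, c ≤ π (X ω) ∧ π (X ω) ≤ 1 - c)
    (hunconf : CondIndepFun (MeasurableSpace.comap X inferInstance) hX.comap_le
      (fun ω => (Y0 ω, Y1 ω)) A ν)
    (d : (Fin p → ℝ) → ℝ) (hdm : Measurable d) (hdbin : ∀ x, d x = 0 ∨ d x = 1) :
    ∫ ω, (if d (X ω) = A ω then 1 else 0)
        * (A ω / π (X ω) + (1 - A ω) / (1 - π (X ω)))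
        * (π (X ω) * (1 - π (X ω)))
        * (A ω * Y1 ω + (1 - A ω) * Y0 ω) ∂ν
      = ∫ ω, π (X ω) * (1 - π (X ω))
          * (d (X ω) * Y1 ω + (1 - d (X ω)) * Y0 ω) ∂ν := by
  obtain ⟨C₀, hY0b⟩ := hY0b
  obtain ⟨C₁, hY1b⟩ := hY1b
  have hY0 : MemLp Y0 ∞ ν := memLp_top_of_bound hY0m.aestronglyMeasurable C₀ (ae_of_all _ hY0b)
  have hY1 : MemLp Y1 ∞ ν := memLp_top_of_bound hY1m.aestronglyMeasurable C₁ (ae_of_all _ hY1b)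
  have hπX : MemLp (fun ω => π (X ω)) ∞ ν := by
    refine memLp_top_of_bound (hπm.comp hX).aestronglyMeasurable 1 ?_
    filter_upwards [hπb] with ω hω
    rw [Real.norm_eq_abs, abs_le]
    constructor <;> linarith [hω.1, hω.2]
  have hA_sub_π : MemLp (fun ω => A ω - π (X ω)) ∞ ν :=
    (memLp_top_of_forall_eq_zero_or_eq_one hA.aestronglyMeasurable hAbin).sub hπX
  have hdX : MemLp (fun ω => d (X ω)) ∞ ν :=
    memLp_top_of_forall_eq_zero_or_eq_one (hdm.comp hX).aestronglyMeasurable (hdbin <| X ·)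
  have h1πX : MemLp (fun ω => 1 - π (X ω)) ∞ ν := (memLp_const 1).sub hπX
  have h1dX : MemLp (fun ω => 1 - d (X ω)) ∞ ν := (memLp_const 1).sub hdX
  have hf : Measurable fun ω => (Y0 ω, Y1 ω) := hY0m.prodMk hY1m
  have hXm : Measurable[MeasurableSpace.comap X inferInstance] X := comap_measurable X
  have K₁ : ∫ ω, Y1 ω * ((A ω - π (X ω)) * (d (X ω) * (1 - π (X ω)))) ∂ν = 0 :=
    hunconf.integral_mul_sub_mul_eq_zero hf hA hAbin hπver measurable_snd hY1
      ((hdm.comp hXm).mul (measurable_const.sub (hπm.comp hXm))).stronglyMeasurable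
      (hdX.mul_top h1πX)
  have K₀ : ∫ ω, Y0 ω * ((A ω - π (X ω)) * ((1 - d (X ω)) * π (X ω))) ∂ν = 0 :=
    hunconf.integral_mul_sub_mul_eq_zero hf hA hAbin hπver measurable_fst hY0
      ((measurable_const.sub (hdm.comp hXm)).mul (hπm.comp hXm)).stronglyMeasurable
      (h1dX.mul_top hπX)
  have hR : Integrable
      (fun ω => π (X ω) * (1 - π (X ω)) * (d (X ω) * Y1 ω + (1 - d (X ω)) * Y0 ω)) ν :=
    ((hπX.mul_top h1πX).mul_top ((hdX.mul_top hY1).add (h1dX.mul_top hY0))).integrable le_top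
  have hK₁ : Integrable (fun ω => Y1 ω * ((A ω - π (X ω)) * (d (X ω) * (1 - π (X ω))))) ν :=
    (hY1.mul_top (hA_sub_π.mul_top (hdX.mul_top h1πX))).integrable le_top
  have hK₀ : Integrable (fun ω => Y0 ω * ((A ω - π (X ω)) * ((1 - d (X ω)) * π (X ω)))) ν :=
    (hY0.mul_top (hA_sub_π.mul_top (h1dX.mul_top hπX))).integrable le_top
  have hpointwise := hπb.mono fun ω hω => overlap_weighted_observed_outcome_eq (y₀ := Y0 ω) (y₁ := Y1 ω)
    (hAbin ω) (hdbin (X ω)) (by linarith [hω.1]) (by linarith [hω.2])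
  rw [integral_congr_ae hpointwise, integral_add hR (hK₁.sub' hK₀), integral_sub hK₁ hK₀, K₁, K₀,
    sub_zero, add_zero]
end

section
/- Let (𝒳, 𝔄, ν) be a probability space and π : 𝒳 → ℝ measurable with 0 < π < 1 ν-a.e., and suppose C_π = ∫ π(1−π) dν satisfies 0 < C_π < ∞. Let g : 𝒳 → [0, ∞) be measurable with ∫ g dν = 1 and with g²/(π(1−π)) ν-integrable. Then ∫ g² / (π(1−π)) dν ≥ 1/C_π, and equality holds for the overlap choice g = π(1−π)/C_π. That is, among all retargeting density ratios g with unit mean, the overlap density ratio proportional to π(x)(1−π(x)) minimizes the variance proxy ∫ g²/(π(1−π)) dν. -/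
/-!
Pointwise AM–GM gives `2 g ≤ C g²/p + p/C` wherever `p = π(1−π) > 0`. Integrating against `ν`,
with `∫ g = 1` and `∫ p = C`, yields `2 ≤ C ∫ g²/p + 1`, i.e. `∫ g²/p ≥ 1/C`. For `g = p/C` the
integrand collapses to `p/C²`, whose integral is `1/C`.
-/

open MeasureTheory

lemma two_mul_le_mul_sq_div_add_div {a w t : ℝ} (hw : 0 < w) (ht : 0 < t) :
    2 * a ≤ t * (a ^ 2 / w) + w / t := by
  have hsq : 0 ≤ (t * a - w) ^ 2 / (t * w) := by positivity
  have hexpand : (t * a - w) ^ 2 / (t * w) = t * (a ^ 2 / w) + w / t - 2 * a := by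
    field_simp
    ring
  linarith

lemma div_sq_div_self (a c : ℝ) : (a / c) ^ 2 / a = a / c ^ 2 := by
  rcases eq_or_ne a 0 with rfl | ha
  · simp
  · field_simp

section WeightedIntegral

variable {α : Type*} [MeasurableSpace α] {μ : Measure α} {w g : α → ℝ}

lemma two_mul_integral_le_mul_integral_sq_div_add_div (hw : ∀ᵐ x ∂μ, 0 < w x)
    (hwint : Integrable w μ) (hg : Integrable g μ)
    (hgw : Integrable (fun x => g x ^ 2 / w x) μ) {t : ℝ} (ht : 0 < t) :
    2 * ∫ x, g x ∂μ ≤ t * ∫ x, g x ^ 2 / w x ∂μ + (∫ x, w x ∂μ) / t := by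
  calc 2 * ∫ x, g x ∂μ = ∫ x, 2 * g x ∂μ := (integral_const_mul _ _).symm
    _ ≤ ∫ x, t * (g x ^ 2 / w x) + w x / t ∂μ := by
      refine integral_mono_ae (hg.const_mul 2) ((hgw.const_mul t).add (hwint.div_const t)) ?_
      filter_upwards [hw] with x hx
      exact two_mul_le_mul_sq_div_add_div hx ht
    _ = t * ∫ x, g x ^ 2 / w x ∂μ + (∫ x, w x ∂μ) / t := by
      rw [integral_add (hgw.const_mul t) (hwint.div_const t), integral_const_mul, integral_div]

lemma one_div_integral_le_integral_sq_div (hw : ∀ᵐ x ∂μ, 0 < w x) (hwint : Integrable w μ)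
    (hwpos : 0 < ∫ x, w x ∂μ) (hg1 : ∫ x, g x ∂μ = 1)
    (hgw : Integrable (fun x => g x ^ 2 / w x) μ) :
    1 / ∫ x, w x ∂μ ≤ ∫ x, g x ^ 2 / w x ∂μ := by
  have key := two_mul_integral_le_mul_integral_sq_div_add_div hw hwint
    (integrable_of_integral_eq_one hg1) hgw hwpos
  rw [hg1, div_self hwpos.ne'] at key
  rw [div_le_iff₀ hwpos]
  linarith

lemma integral_div_sq_div_self (c : ℝ) :
    ∫ x, (w x / c) ^ 2 / w x ∂μ = (∫ x, w x ∂μ) / c ^ 2 := by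
  simp only [div_sq_div_self, integral_div]

end WeightedIntegral

theorem overlap_density_ratio_minimizes_variance_proxy_general
    {𝒳 : Type*} [MeasurableSpace 𝒳] (ν : Measure 𝒳)
    (π : 𝒳 → ℝ)
    (hπ01 : ∀ᵐ x ∂ν, 0 < π x ∧ π x < 1)
    (hπint : Integrable (fun x => π x * (1 - π x)) ν)
    (C : ℝ) (hC : C = ∫ x, π x * (1 - π x) ∂ν) (hCpos : 0 < C)
    (g : 𝒳 → ℝ)
    (hg1 : ∫ x, g x ∂ν = 1)
    (hgint : Integrable (fun x => g x ^ 2 / (π x * (1 - π x))) ν) :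
    1 / C ≤ ∫ x, g x ^ 2 / (π x * (1 - π x)) ∂ν
    ∧ ∫ x, (π x * (1 - π x) / C) ^ 2 / (π x * (1 - π x)) ∂ν = 1 / C := by
  have hoverlap_pos : ∀ᵐ x ∂ν, 0 < π x * (1 - π x) := by
    filter_upwards [hπ01] with x hx
    exact mul_pos hx.1 (sub_pos.mpr hx.2)
  subst hC
  refine ⟨one_div_integral_le_integral_sq_div hoverlap_pos hπint hCpos hg1 hgint, ?_⟩
  rw [integral_div_sq_div_self, sq, ← div_div, div_self hCpos.ne']

/-- **Optimality of the overlap retargeting density ratio.** Among all nonnegative retargeting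
density ratios `g` with `∫ g dν = 1`, the variance proxy `∫ g²/(π(1−π)) dν` is at least
`1/C_π` where `C_π = ∫ π(1−π) dν`, and equality holds for the overlap choice
`g = π(1−π)/C_π`. -/
theorem overlap_density_ratio_minimizes_variance_proxy
    {𝒳 : Type*} [MeasurableSpace 𝒳] (ν : Measure 𝒳) [IsProbabilityMeasure ν]
    (π : 𝒳 → ℝ) (hπm : Measurable π)
    (hπ01 : ∀ᵐ x ∂ν, 0 < π x ∧ π x < 1)
    (hπint : Integrable (fun x => π x * (1 - π x)) ν)
    (C : ℝ) (hC : C = ∫ x, π x * (1 - π x) ∂ν) (hCpos : 0 < C)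
    (g : 𝒳 → ℝ) (hgm : Measurable g) (hg0 : ∀ x, 0 ≤ g x)
    (hg1 : ∫ x, g x ∂ν = 1)
    (hgint : Integrable (fun x => g x ^ 2 / (π x * (1 - π x))) ν) :
    1 / C ≤ ∫ x, g x ^ 2 / (π x * (1 - π x)) ∂ν
    ∧ ∫ x, (π x * (1 - π x) / C) ^ 2 / (π x * (1 - π x)) ∂ν = 1 / C :=
  overlap_density_ratio_minimizes_variance_proxy_general ν π hπ01 hπint C hC hCpos g hg1 hgint
end
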